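/- arXiv:1508.02046 — 2 statements merged into one kernel-verified Lean document; each statement's English description precedes it below -/
import Mathlib

section
/- Let n be an odd positive integer and let a, b, c, d be nonnegative integers with 0 ≤ b ≤ n−1 and 0 ≤ d ≤ n−1. Then, as a congruence in the polynomial ring ℤ[q] modulo the n-th cyclotomic polynomial Φ_n(q), one has D_q(an+b, cn+d) ≡ D(a,c) · D_q(b,d) (mod Φ_n(q)), where D(a,c) is the ordinary Delannoy number. -/
open Polynomial Finset

/-- The Gaussian (q-)binomial coefficient `[h choose k]_q` as a polynomial in `ℤ[q]`,
defined via the q-Pascal recurrence; it equals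
`([h]_q [h−1]_q ⋯ [h−k+1]_q)/([k]_q ⋯ [1]_q)`. -/
noncomputable def qBinom : ℕ → ℕ → Polynomial ℤ
  | _, 0 => 1
  | 0, _ + 1 => 0
  | h + 1, k + 1 => qBinom h k + Polynomial.X ^ (k + 1) * qBinom h (k + 1)

/-- The q-Delannoy number `D_q(h,k) = Σ_{j=0}^{h} q^{binom(j+1,2)} [k choose j]_q
[h+k−j choose k]_q`. -/
noncomputable def qDelannoy (h k : ℕ) : Polynomial ℤ :=
  ∑ j ∈ Finset.range (h + 1),
    Polynomial.X ^ ((j + 1).choose 2) * qBinom k j * qBinom (h + k - j) k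

/-- The Delannoy number `D(h,k) = Σ_{j=0}^{h} binom(k,j) binom(h+k−j,k)`. -/
def delannoy (h k : ℕ) : ℕ :=
  ∑ j ∈ Finset.range (h + 1), k.choose j * (h + k - j).choose k

lemma qBinom_zero_right (h : ℕ) : qBinom h 0 = 1 := by cases h <;> rfl
lemma qBinom_succ_succ (h k : ℕ) :
    qBinom (h+1) (k+1) = qBinom h k + Polynomial.X ^ (k + 1) * qBinom h (k + 1) := rfl
lemma qBinom_eq_zero : ∀ {h k : ℕ}, h < k → qBinom h k = 0
  | 0, _ + 1, _ => rfl
  | h + 1, k + 1, hlt => by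
      rw [qBinom_succ_succ, qBinom_eq_zero (by omega : h < k),
        qBinom_eq_zero (by omega : h < k + 1)]
      ring
noncomputable def qB (ζ : ℂ) (h k : ℕ) : ℂ := Polynomial.aeval ζ (qBinom h k)
lemma qB_zero_right (ζ : ℂ) (h : ℕ) : qB ζ h 0 = 1 := by simp [qB, qBinom_zero_right]
lemma qB_succ (ζ : ℂ) (h k : ℕ) :
    qB ζ (h+1) (k+1) = qB ζ h k + ζ^(k+1) * qB ζ h (k+1) := by
  simp [qB, qBinom_succ_succ]
lemma qB_eq_zero {ζ : ℂ} {h k : ℕ} (hlt : h < k) : qB ζ h k = 0 := by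
  simp [qB, qBinom_eq_zero hlt]

lemma choose2_step (k : ℕ) : (k+1+1).choose 2 = (k+1).choose 2 + (k+1) := by
  show (k+1).choose 1 + (k+1).choose 2 = _
  rw [Nat.choose_one_right]
  omega

lemma gen_formula (ζ : ℂ) (h : ℕ) :
    ∏ i ∈ range h, (1 + C (ζ^(i+1)) * X) =
      ∑ k ∈ range (h+1), C (ζ^((k+1).choose 2) * qB ζ h k) * X^k := by
  induction h with
  | zero => simp [qB_zero_right]
  | succ h ih =>
    have hcomp : (∏ i ∈ range h, (1 + C (ζ^(i+1)) * X)).comp (C ζ * X) =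
        ∏ i ∈ range h, (1 + C (ζ^(i+2)) * X) := by
      rw [Polynomial.prod_comp]
      refine Finset.prod_congr rfl fun i _ => ?_
      rw [add_comp, one_comp, mul_comp, C_comp, X_comp, ← mul_assoc, ← C_mul, ← pow_succ]
    have hstep : ∏ i ∈ range (h+1), (1 + C (ζ^(i+1)) * X) =
        (1 + C ζ * X) * (∏ i ∈ range h, (1 + C (ζ^(i+1)) * X)).comp (C ζ * X) := by
      rw [hcomp, Finset.prod_range_succ', mul_comm]
      norm_num
    have hterm : ∀ k : ℕ, (C (ζ^((k+1).choose 2) * qB ζ h k) * X^k).comp (C ζ * X) =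
        C (ζ^((k+1).choose 2 + k) * qB ζ h k) * X^k := by
      intro k
      have hc : ζ^((k+1).choose 2 + k) * qB ζ h k =
          ζ^((k+1).choose 2) * qB ζ h k * ζ^k := by rw [pow_add]; ring
      rw [hc, mul_comp, C_comp, pow_comp, X_comp, mul_pow, ← C_pow]
      simp only [C_mul]
      ring
    have hext : ∑ k ∈ range (h+1), C (ζ^((k+1).choose 2 + k) * qB ζ h k) * X^k =
        ∑ k ∈ range (h+1+1), C (ζ^((k+1).choose 2 + k) * qB ζ h k) * X^k := by
      rw [Finset.sum_range_succ (n := h+1), qB_eq_zero (by omega : h < h+1)]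
      simp
    rw [hstep, ih, Polynomial.sum_comp]
    simp only [hterm]
    rw [one_add_mul, Finset.mul_sum, hext]
    rw [Finset.sum_range_succ' (fun k => C (ζ^((k+1).choose 2 + k) * qB ζ h k) * X^k) (h+1),
        Finset.sum_range_succ' (fun k => C (ζ^((k+1).choose 2) * qB ζ (h+1) k) * X^k) (h+1)]
    rw [add_right_comm]
    congr 1
    · rw [← Finset.sum_add_distrib]
      refine Finset.sum_congr rfl fun k _ => ?_
      rw [qB_succ, choose2_step]
      simp only [pow_add, C_mul, C_add, mul_add]
      ring
    · norm_num [qB_zero_right]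
variable {n : ℕ} {ζ : ℂ}

lemma prod_X_add_C (hn : 0 < n) (hodd : Odd n) (hζ : IsPrimitiveRoot ζ n) :
    ∏ i ∈ range n, (X + C (ζ^i)) = X^n + 1 := by
  have e : (-1 : ℂ)^n = -1 := hodd.neg_one_pow
  have h := X_pow_sub_C_eq_prod hζ hn e
  simp only [map_neg, map_one, sub_neg_eq_add, mul_neg, mul_one] at h
  rw [h]

lemma cyc0 (hn : 0 < n) (hodd : Odd n) (hζ : IsPrimitiveRoot ζ n) :
    ∏ i ∈ range n, (1 + C (ζ^(i+1)) * X) = 1 + X^n := by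
  have key : ∀ i ∈ range n, (1 + C (ζ^(i+1)) * X) = C (ζ^(i+1)) * (X + C (ζ^(n-1-i))) := by
    intro i hi
    rw [Finset.mem_range] at hi
    have hij : (i+1) + (n-1-i) = n := by omega
    rw [mul_add, ← C_mul, ← pow_add, hij, hζ.pow_eq_one, map_one]
    ring
  rw [Finset.prod_congr rfl key, Finset.prod_mul_distrib,
    Finset.prod_range_reflect (fun j => X + C (ζ^j)) n,
    prod_X_add_C hn hodd hζ, ← map_prod, Finset.prod_pow_eq_pow_sum]
  obtain ⟨m, hm⟩ := hodd
  have hsum : ∑ i ∈ range n, (i+1) = n * (m+1) := by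
    have h2 : (∑ i ∈ range n, i) * 2 = n * (n-1) := Finset.sum_range_id_mul_two n
    have : ∑ i ∈ range n, (i+1) = (∑ i ∈ range n, i) + n := by
      rw [Finset.sum_add_distrib]; simp
    have hnn : n * (n-1) = 2 * (n * m) := by
      have : n - 1 = 2 * m := by omega
      rw [this]; ring
    have hx : n*(m+1) = n*m + n := by ring
    omega
  rw [hsum, pow_mul, hζ.pow_eq_one, one_pow, map_one, one_mul, add_comm]

lemma cych (hn : 0 < n) (hodd : Odd n) (hζ : IsPrimitiveRoot ζ n) (h : ℕ) :
    ∏ i ∈ range n, (1 + C (ζ^(h+i+1)) * X) = 1 + X^n := by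
  have := congrArg (fun p => p.comp (C (ζ^h) * X)) (cyc0 hn hodd hζ)
  simp only [Polynomial.prod_comp, add_comp, one_comp, mul_comp, C_comp, X_comp, pow_comp] at this
  have lhs : ∀ i ∈ range n, 1 + C (ζ^(i+1)) * (C (ζ^h) * X) = 1 + C (ζ^(h+i+1)) * X := by
    intro i _
    rw [← mul_assoc, ← C_mul, ← pow_add]
    ring_nf
  rw [Finset.prod_congr rfl lhs] at this
  rw [this, mul_pow, ← C_pow, ← pow_mul]
  have h1 : ζ^(h*n) = 1 := by rw [mul_comm, pow_mul, hζ.pow_eq_one, one_pow]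
  rw [h1, map_one, one_mul]

lemma coeff_sum_form (ζ : ℂ) (h m : ℕ) :
    (∑ k ∈ range (h+1), C (ζ^((k+1).choose 2) * qB ζ h k) * X^k).coeff m
      = ζ^((m+1).choose 2) * qB ζ h m := by
  rw [finset_sum_coeff]
  simp only [coeff_C_mul, coeff_X_pow, mul_ite, mul_one, mul_zero]
  rw [Finset.sum_ite_eq (range (h+1)) m (fun k => ζ^((k+1).choose 2) * qB ζ h k)]
  split_ifs with hm
  · rfl
  · rw [Finset.mem_range] at hm
    rw [qB_eq_zero (by omega : h < m), mul_zero]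

lemma per_mul (hn : 0 < n) (hodd : Odd n) (hζ : IsPrimitiveRoot ζ n) (h : ℕ) :
    ∏ i ∈ range (h+n), (1 + C (ζ^(i+1)) * X) =
      (∏ i ∈ range h, (1 + C (ζ^(i+1)) * X)) * (1 + X^n) := by
  rw [Finset.prod_range_add]
  congr 1
  exact cych hn hodd hζ h

lemma pow_eq_pow_mod' (hζ : IsPrimitiveRoot ζ n) {s t : ℕ} (h : s % n = t % n) : ζ^s = ζ^t := by
  conv_lhs => rw [← Nat.div_add_mod s n]
  conv_rhs => rw [← Nat.div_add_mod t n]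
  rw [pow_add, pow_add, pow_mul, pow_mul, hζ.pow_eq_one, h]
  simp

lemma two_mul_choose2 (m : ℕ) : 2 * ((m+1).choose 2) = m * (m+1) := by
  rw [Nat.choose_two_right, Nat.add_sub_cancel]
  obtain ⟨t, ht⟩ := Nat.even_mul_succ_self m
  have hcomm : (m+1) * m = m * (m+1) := Nat.mul_comm _ _
  omega

lemma choose2_mod (hodd : Odd n) (e f : ℕ) :
    ((e*n+f+1).choose 2) % n = ((f+1).choose 2) % n := by
  have h1 : (e*n+f) % n = f % n := by rw [mul_comm]; exact Nat.mul_add_mod n e f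
  have h1' : (e*n+f+1) % n = (f+1) % n := Nat.ModEq.add_right 1 h1
  have hmul : ((e*n+f) * (e*n+f+1)) % n = (f * (f+1)) % n := Nat.ModEq.mul h1 h1'
  have h2a := two_mul_choose2 (e*n+f)
  have h2b := two_mul_choose2 f
  have : 2 * ((e*n+f+1).choose 2) ≡ 2 * ((f+1).choose 2) [MOD n] := by
    rw [h2a, h2b]; exact hmul
  exact Nat.ModEq.cancel_left_of_coprime (Nat.coprime_two_right.mpr hodd) this

lemma pow_choose2 (hodd : Odd n) (hζ : IsPrimitiveRoot ζ n) (e f : ℕ) :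
    ζ^((e*n+f+1).choose 2) = ζ^((f+1).choose 2) :=
  pow_eq_pow_mod' hζ (choose2_mod hodd e f)

lemma sum_eq_sum_mul (hn : 0 < n) (hodd : Odd n) (hζ : IsPrimitiveRoot ζ n) (h : ℕ) :
    ∑ k ∈ range (h+n+1), C (ζ^((k+1).choose 2) * qB ζ (h+n) k) * X^k =
      (∑ k ∈ range (h+1), C (ζ^((k+1).choose 2) * qB ζ h k) * X^k) * (1 + X^n) := by
  rw [← gen_formula, ← gen_formula, per_mul hn hodd hζ]

lemma per1 (hn : 0 < n) (hodd : Odd n) (hζ : IsPrimitiveRoot ζ n) (h m : ℕ) (hm : m < n) :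
    qB ζ (h+n) m = qB ζ h m := by
  have key := congrArg (fun p => p.coeff m) (sum_eq_sum_mul hn hodd hζ h)
  simp only [coeff_sum_form, mul_one_add, coeff_add, coeff_mul_X_pow'] at key
  rw [if_neg (by omega : ¬ n ≤ m), add_zero] at key
  exact mul_left_cancel₀ (pow_ne_zero _ (hζ.ne_zero hn.ne')) key

lemma per2 (hn : 0 < n) (hodd : Odd n) (hζ : IsPrimitiveRoot ζ n) (h m : ℕ) :
    qB ζ (h+n) (m+n) = qB ζ h (m+n) + qB ζ h m := by
  have key := congrArg (fun p => p.coeff (m+n)) (sum_eq_sum_mul hn hodd hζ h)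
  simp only [coeff_sum_form, mul_one_add, coeff_add, coeff_mul_X_pow'] at key
  rw [if_pos (Nat.le_add_left n m), Nat.add_sub_cancel] at key
  have hp : ζ^((m+n+1).choose 2) = ζ^((m+1).choose 2) := by
    have : m+n+1 = 1*n+m+1 := by ring
    rw [this]
    exact pow_choose2 hodd hζ 1 m
  rw [hp] at key
  rw [← mul_add] at key
  exact mul_left_cancel₀ (pow_ne_zero _ (hζ.ne_zero hn.ne')) key

lemma qB_lucas (hn : 0 < n) (hodd : Odd n) (hζ : IsPrimitiveRoot ζ n) :
    ∀ (a c b d : ℕ), d < n → b < n →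
      qB ζ (a*n+b) (c*n+d) = (a.choose c : ℂ) * qB ζ b d := by
  intro a
  induction a with
  | zero =>
    intro c b d hd hb
    cases c with
    | zero => simp
    | succ c =>
      have hlt : b < (c+1)*n+d := by
        have : n ≤ (c+1)*n := Nat.le_mul_of_pos_left n c.succ_pos
        omega
      rw [show (0:ℕ)*n+b = b by ring, qB_eq_zero hlt, Nat.choose_zero_succ]
      simp
  | succ a ih =>
    intro c b d hd hb
    rw [show (a+1)*n+b = (a*n+b)+n by ring]
    cases c with
    | zero =>
      rw [show (0:ℕ)*n+d = d by ring, per1 hn hodd hζ _ d hd]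
      have h0 := ih 0 b d hd hb
      rw [show (0:ℕ)*n+d = d by ring] at h0
      rw [h0, Nat.choose_zero_right, Nat.choose_zero_right]
    | succ c =>
      rw [show (c+1)*n+d = (c*n+d)+n by ring, per2 hn hodd hζ (a*n+b) (c*n+d),
        show (c*n+d)+n = (c+1)*n+d by ring, ih (c+1) b d hd hb, ih c b d hd hb,
        Nat.choose_succ_succ]
      push_cast
      ring

lemma term_eval (hn : 0 < n) (hodd : Odd n) (hζ : IsPrimitiveRoot ζ n)
    (a b c d e f : ℕ) (hb : b < n) (hd : d < n) (he : e ≤ a) (hf : f < n) :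
    ζ^((e*n+f+1).choose 2) * qB ζ (c*n+d) (e*n+f) * qB ζ (a*n+b+(c*n+d)-(e*n+f)) (c*n+d)
      = (c.choose e : ℂ) * ((a+c-e).choose c : ℂ) *
        (ζ^((f+1).choose 2) * qB ζ d f * qB ζ (b+d-f) d) := by
  rw [pow_choose2 hodd hζ e f, qB_lucas hn hodd hζ c e d f hf hd]
  by_cases hfd : d < f
  · rw [qB_eq_zero hfd]; ring
  · push_neg at hfd
    by_cases hcarry : b+d-f < n
    · have hsub : a*n+b+(c*n+d)-(e*n+f) = (a+c-e)*n+(b+d-f) := by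
        have h2 : (a+c-e)*n + e*n = (a+c)*n := by
          rw [← Nat.add_mul]; congr 1; omega
        have h1 : a*n+b+(c*n+d) = ((a+c-e)*n+(b+d-f)) + (e*n+f) := by
          calc a*n+b+(c*n+d) = (a+c)*n + (b+d) := by ring
            _ = ((a+c-e)*n + e*n) + ((b+d-f)+f) := by rw [h2]; congr 1; omega
            _ = ((a+c-e)*n+(b+d-f)) + (e*n+f) := by ring
        exact Nat.sub_eq_of_eq_add h1
      rw [hsub, qB_lucas hn hodd hζ (a+c-e) c (b+d-f) d hd hcarry]
      ring
    · push_neg at hcarry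
      have hlt1 : b+d-f-n < d := by omega
      have hlt2 : b+d-f-n < n := by omega
      have hsub : a*n+b+(c*n+d)-(e*n+f) = (a+c-e+1)*n+(b+d-f-n) := by
        have h2 : (a+c-e+1)*n + e*n = (a+c+1)*n := by
          rw [← Nat.add_mul]; congr 1; omega
        have h1 : a*n+b+(c*n+d) = ((a+c-e+1)*n+(b+d-f-n)) + (e*n+f) := by
          calc a*n+b+(c*n+d) = (a+c+1)*n + ((b+d-f-n)+f) := by
                rw [show (a+c+1)*n = (a+c)*n + n by ring]
                have : (b+d-f-n) + f + n = b + d := by omega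
                have hx : (a+c)*n + n + ((b+d-f-n)+f) = (a+c)*n + ((b+d-f-n)+f+n) := by ring
                rw [hx, this]; ring
            _ = ((a+c-e+1)*n + e*n) + ((b+d-f-n)+f) := by rw [h2]
            _ = ((a+c-e+1)*n+(b+d-f-n)) + (e*n+f) := by ring
        exact Nat.sub_eq_of_eq_add h1
      rw [hsub, qB_lucas hn hodd hζ (a+c-e+1) c (b+d-f-n) d hd hlt2, qB_eq_zero hlt1]
      have hr : qB ζ (b+d-f) d = 0 := by
        rw [show b+d-f = (b+d-f-n)+n by omega, per1 hn hodd hζ _ d hd, qB_eq_zero hlt1]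
      rw [hr]
      ring

lemma u_eq_zero (hb : b < n) (hd : d < n) {f : ℕ} (hf : b < f) :
    ζ^((f+1).choose 2) * qB ζ d f * qB ζ (b+d-f) d = 0 := by
  by_cases hfd : d < f
  · rw [qB_eq_zero hfd]; ring
  · rw [qB_eq_zero (show b+d-f < d by omega)]; ring

lemma aeval_qDelannoy (ζ : ℂ) (h k : ℕ) :
    Polynomial.aeval ζ (qDelannoy h k) =
      ∑ j ∈ range (h+1), ζ^((j+1).choose 2) * qB ζ k j * qB ζ (h+k-j) k := by
  unfold qDelannoy qB
  simp

lemma innerSumU (hb : b < n) (hd : d < n) (ζ : ℂ) :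
    ∑ f ∈ range n, (ζ^((f+1).choose 2) * qB ζ d f * qB ζ (b+d-f) d)
      = Polynomial.aeval ζ (qDelannoy b d) := by
  rw [aeval_qDelannoy]
  symm
  apply Finset.sum_subset
  · intro x hx
    rw [Finset.mem_range] at *
    omega
  · intro f _ hfb
    rw [Finset.mem_range] at hfb
    exact u_eq_zero hb hd (by omega)

lemma sum_range_mul_split {M : Type*} [AddCommMonoid M] (g : ℕ → M) (a m : ℕ) :
    ∑ j ∈ range ((a+1)*m), g j = ∑ e ∈ range (a+1), ∑ f ∈ range m, g (e*m+f) := by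
  induction a with
  | zero => simp
  | succ a ih =>
    rw [show (a+1+1)*m = (a+1)*m + m by ring, Finset.sum_range_add, ih,
      Finset.sum_range_succ (fun e => ∑ f ∈ range m, g (e*m+f)) (a+1)]

theorem qDelannoy_lucas_odd (n : ℕ) (hn : 0 < n) (hodd : Odd n)
    (a b c d : ℕ) (hb : b ≤ n - 1) (hd : d ≤ n - 1) :
    Polynomial.cyclotomic n ℤ ∣
      qDelannoy (a * n + b) (c * n + d) -
        (delannoy a c : Polynomial ℤ) * qDelannoy b d := by
  have hb' : b < n := by omega
  have hd' : d < n := by omega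
  obtain ⟨ζ, hζ⟩ : ∃ ζ : ℂ, IsPrimitiveRoot ζ n := ⟨_, Complex.isPrimitiveRoot_exp n hn.ne'⟩
  rw [Polynomial.cyclotomic_eq_minpoly hζ hn]
  refine minpoly.isIntegrallyClosed_dvd (hζ.isIntegral hn) ?_
  rw [map_sub, map_mul, map_natCast, sub_eq_zero, aeval_qDelannoy, aeval_qDelannoy]
  have har : (a+1)*n = a*n + n := by ring
  have step1 : (∑ j ∈ range (a*n+b+1),
        ζ^((j+1).choose 2) * qB ζ (c*n+d) j * qB ζ (a*n+b+(c*n+d)-j) (c*n+d))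
      = ∑ j ∈ range ((a+1)*n),
        ζ^((j+1).choose 2) * qB ζ (c*n+d) j * qB ζ (a*n+b+(c*n+d)-j) (c*n+d) := by
    apply Finset.sum_subset
    · intro x hx
      rw [Finset.mem_range] at *
      omega
    · intro j hj hnj
      rw [Finset.mem_range] at hj hnj
      obtain ⟨f, rfl⟩ : ∃ f, j = a*n+f := ⟨j - a*n, by omega⟩
      rw [term_eval hn hodd hζ a b c d a f hb' hd' le_rfl (by omega)]
      rw [u_eq_zero hb' hd' (show b < f by omega)]
      ring
  rw [step1, sum_range_mul_split
    (fun j => ζ^((j+1).choose 2) * qB ζ (c*n+d) j * qB ζ (a*n+b+(c*n+d)-j) (c*n+d)) a n]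
  have step2 : ∀ e ∈ range (a+1),
      (∑ f ∈ range n, (ζ^((e*n+f+1).choose 2) * qB ζ (c*n+d) (e*n+f)
          * qB ζ (a*n+b+(c*n+d)-(e*n+f)) (c*n+d)))
        = (↑(c.choose e) * ↑((a+c-e).choose c)) * Polynomial.aeval ζ (qDelannoy b d) := by
    intro e he
    rw [Finset.mem_range] at he
    rw [← innerSumU hb' hd' ζ, Finset.mul_sum]
    refine Finset.sum_congr rfl fun f hf => ?_
    rw [Finset.mem_range] at hf
    rw [term_eval hn hodd hζ a b c d e f hb' hd' (by omega) hf]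
  rw [Finset.sum_congr rfl step2, ← Finset.sum_mul, ← aeval_qDelannoy ζ b d]
  congr 1
  simp [delannoy]
end

section
/- Let p be a prime and let a, b, c, d be nonnegative integers with 0 ≤ b ≤ p−1 and 0 ≤ d ≤ p−1. Then the Delannoy numbers satisfy the Lucas-type congruence D(ap+b, cp+d) ≡ D(a,c) · D(b,d) (mod p). -/
open Finset

/-!
Vandermonde's identity rewrites `D(h,k)` as `Σ_j C(h,j) C(k,j) 2^j`. In this form the summand is
multiplicative in base-`p` digits modulo `p`: for `j = qp + r` with `r < p`, Lucas' theorem splits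
both binomial coefficients and Fermat's little theorem gives `2^(qp+r) ≡ 2^q 2^r`. Summing over
`j < (a+1)p` block by block, the sum for `(ap+b, cp+d)` factors into the sums for `(a,c)` and `(b,d)`.
-/

lemma sum_range_mul_eq_sum_sum {M : Type*} [AddCommMonoid M] (f : ℕ → M) (n q : ℕ) :
    ∑ j ∈ range (n * q), f j = ∑ i ∈ range n, ∑ r ∈ range q, f (i * q + r) := by
  induction n with
  | zero => simp
  | succ n ih => rw [Nat.succ_mul, sum_range_add, ih, sum_range_succ]

lemma Nat.choose_mul_choose_sub_sub {k u : ℕ} (i : ℕ) (hu : u ≤ k) :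
    k.choose i * (k - i).choose (k - u) = k.choose u * u.choose i := by
  rcases le_or_gt i u with hiu | hiu
  · rw [Nat.choose_mul hiu, ← Nat.choose_symm (by omega : u - i ≤ k - i)]
    congr 2
    omega
  · rw [Nat.choose_eq_zero_of_lt hiu, mul_zero]
    rcases le_or_gt i k with hik | hik
    · rw [Nat.choose_eq_zero_of_lt (by omega : k - i < k - u), mul_zero]
    · rw [Nat.choose_eq_zero_of_lt hik, zero_mul]

lemma Nat.sum_range_choose_of_lt {n N : ℕ} (hN : n < N) : ∑ i ∈ range N, n.choose i = 2 ^ n := by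
  rw [eventually_constant_sum (fun i hi => Nat.choose_eq_zero_of_lt hi) hN, Nat.sum_range_choose]

lemma Nat.choose_add_sub_eq_sum (h : ℕ) {i k : ℕ} (hik : i ≤ k) :
    (h + k - i).choose k = ∑ u ∈ range (k + 1), h.choose u * (k - i).choose (k - u) := by
  rw [show h + k - i = h + (k - i) by omega, Nat.add_choose_eq,
    Nat.sum_antidiagonal_eq_sum_range_succ_mk]

lemma sum_range_choose_mul_choose_mul_two_pow (h k : ℕ) {N : ℕ} (hN : min h k < N) :
    ∑ j ∈ range N, h.choose j * k.choose j * 2 ^ j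
      = ∑ j ∈ range (min h k + 1), h.choose j * k.choose j * 2 ^ j := by
  refine eventually_constant_sum (fun j hj => ?_) hN
  rcases min_choice h k with hmin | hmin <;> rw [hmin] at hj
  · rw [Nat.choose_eq_zero_of_lt hj, zero_mul, zero_mul]
  · rw [Nat.choose_eq_zero_of_lt hj, mul_zero, zero_mul]

lemma delannoy_eq_sum_range_succ_right (h k : ℕ) :
    delannoy h k = ∑ u ∈ range (k + 1), h.choose u * k.choose u * 2 ^ u := by
  have vandermonde : ∀ i, k.choose i * (h + k - i).choose k
      = ∑ u ∈ range (k + 1), h.choose u * (k.choose i * (k - i).choose (k - u)) := by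
    intro i
    rcases le_or_gt i k with hik | hik
    · rw [Nat.choose_add_sub_eq_sum h hik, mul_sum]
      exact sum_congr rfl fun u _ => by ring
    · simp [Nat.choose_eq_zero_of_lt hik]
  rw [delannoy, sum_congr rfl fun i _ => vandermonde i, sum_comm]
  refine sum_congr rfl fun u hu => ?_
  have hu : u ≤ k := mem_range_succ_iff.1 hu
  rw [← mul_sum, sum_congr rfl fun i _ => Nat.choose_mul_choose_sub_sub i hu, ← mul_sum]
  rcases le_or_gt u h with huh | huh
  · rw [Nat.sum_range_choose_of_lt (Nat.lt_succ_of_le huh), mul_assoc]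
  · rw [Nat.choose_eq_zero_of_lt huh, zero_mul, zero_mul, zero_mul]

lemma delannoy_eq_sum_range (h k : ℕ) {N : ℕ} (hN : min h k < N) :
    delannoy h k = ∑ j ∈ range N, h.choose j * k.choose j * 2 ^ j := by
  rw [delannoy_eq_sum_range_succ_right, sum_range_choose_mul_choose_mul_two_pow h k hN,
    sum_range_choose_mul_choose_mul_two_pow h k (by omega)]

namespace Choose

variable {p : ℕ} [Fact p.Prime]

theorem choose_mul_add_modEq_choose_mul_choose (a q : ℕ) {b r : ℕ} (hb : b < p) (hr : r < p) :
    (a * p + b).choose (q * p + r) ≡ a.choose q * b.choose r [MOD p] := by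
  have div_eq (x : ℕ) {y : ℕ} (hy : y < p) : (x * p + y) / p = x := by
    simp [Nat.add_div_of_dvd_right (Nat.dvd_mul_left p x), Nat.div_eq_of_lt hy,
      (Fact.out : p.Prime).pos]
  have lucas :=
    choose_modEq_choose_mod_mul_choose_div_nat (n := a * p + b) (k := q * p + r) (p := p)
  rwa [Nat.mul_add_mod_of_lt hb, Nat.mul_add_mod_of_lt hr, div_eq a hb, div_eq q hr,
    mul_comm (b.choose r)] at lucas

end Choose

lemma cast_choose_mul_choose_mul_two_pow_mul_add {p : ℕ} [Fact p.Prime] (a c q : ℕ) {b d r : ℕ}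
    (hb : b < p) (hd : d < p) (hr : r < p) :
    (((a * p + b).choose (q * p + r) * (c * p + d).choose (q * p + r) * 2 ^ (q * p + r) : ℕ)
        : ZMod p)
      = ((a.choose q * c.choose q * 2 ^ q : ℕ) : ZMod p)
        * ((b.choose r * d.choose r * 2 ^ r : ℕ) : ZMod p) := by
  have lucas (x : ℕ) {z : ℕ} (hz : z < p) :
      ((x * p + z).choose (q * p + r) : ZMod p) = x.choose q * z.choose r := by
    exact_mod_cast (ZMod.natCast_eq_natCast_iff _ _ _).2
      (Choose.choose_mul_add_modEq_choose_mul_choose x q hz hr)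
  push_cast
  rw [lucas a hb, lucas c hd, pow_add, pow_mul, ZMod.pow_card]
  ring

theorem delannoy_lucas (p : ℕ) (hp : p.Prime) (a b c d : ℕ)
    (hb : b ≤ p - 1) (hd : d ≤ p - 1) :
    delannoy (a * p + b) (c * p + d) ≡ delannoy a c * delannoy b d [MOD p] := by
  have : Fact p.Prime := ⟨hp⟩
  have hbp : b < p := by have := hp.pos; omega
  have hdp : d < p := by have := hp.pos; omega
  rw [← ZMod.natCast_eq_natCast_iff, Nat.cast_mul,
    delannoy_eq_sum_range (a * p + b) _ (N := (a + 1) * p) (by rw [Nat.succ_mul]; omega),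
    delannoy_eq_sum_range a c (N := a + 1) (by omega),
    delannoy_eq_sum_range b d (N := p) (by omega),
    sum_range_mul_eq_sum_sum]
  simp only [Nat.cast_sum, sum_mul_sum]
  exact sum_congr rfl fun q _ => sum_congr rfl fun r hr =>
    cast_choose_mul_choose_mul_two_pow_mul_add a c q hbp hdp (mem_range.1 hr)
end
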